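/- Let 𝒜 = {A₁, A₂, A₃, A₄} be a 4-cover of ℝ with A₂ = ∅. Then the hybrid space H₄(𝒜) is quasi-metrizable if and only if A₃ is of type F_σ in 𝕊← (a countable union of sets closed in 𝕊←) and A₄ is of type F_σ in 𝕊 (a countable union of sets closed in 𝕊). -/
import Mathlib


open Set

/-- The Sorgenfrey topology on ℝ (generated by the intervals `[a, b)`). -/
def sorgenfreyTop : TopologicalSpace ℝ :=
  TopologicalSpace.generateFrom {S : Set ℝ | ∃ a b : ℝ, S = Set.Ico a b}

/-- The "left" Sorgenfrey topology on ℝ (generated by the intervals `(a, b]`). -/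
def sorgenfreyLeftTop : TopologicalSpace ℝ :=
  TopologicalSpace.generateFrom {S : Set ℝ | ∃ a b : ℝ, S = Set.Ioc a b}

/-- `A₁, A₂, A₃, A₄` form a 4-cover of ℝ: pairwise disjoint with union ℝ. -/
def Is4Cover (A₁ A₂ A₃ A₄ : Set ℝ) : Prop :=
  A₁ ∪ A₂ ∪ A₃ ∪ A₄ = Set.univ ∧
  Disjoint A₁ A₂ ∧ Disjoint A₁ A₃ ∧ Disjoint A₁ A₄ ∧
  Disjoint A₂ A₃ ∧ Disjoint A₂ A₄ ∧ Disjoint A₃ A₄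

/-- The hybrid topology determined by a 4-cover: points of `A₁` have the usual
open intervals as a local base, points of `A₂` are isolated, points of `A₃`
have a local base of sets `[x, x+ε)`, and points of `A₄` of sets `(x-ε, x]`. -/
def hybridTop (A₁ A₂ A₃ A₄ : Set ℝ) : TopologicalSpace ℝ :=
  TopologicalSpace.generateFrom
    ({S : Set ℝ | ∃ x ∈ A₁, ∃ ε : ℝ, 0 < ε ∧ S = Set.Ioo (x - ε) (x + ε)} ∪
     {S : Set ℝ | ∃ x ∈ A₂, S = {x}} ∪
     {S : Set ℝ | ∃ x ∈ A₃, ∃ ε : ℝ, 0 < ε ∧ S = Set.Ico x (x + ε)} ∪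
     {S : Set ℝ | ∃ x ∈ A₄, ∃ ε : ℝ, 0 < ε ∧ S = Set.Ioc (x - ε) x})

/-- A quasi-metric: nonnegative, vanishing exactly on the diagonal,
satisfying the triangle inequality. -/
def IsQuasiMetric {X : Type*} (ρ : X → X → ℝ) : Prop :=
  (∀ x y, 0 ≤ ρ x y) ∧ (∀ x y, ρ x y = 0 ↔ x = y) ∧
  (∀ x y z, ρ x y ≤ ρ x z + ρ z y)

/-- A non-archimedean quasi-metric. -/
def IsNAQuasiMetric {X : Type*} (ρ : X → X → ℝ) : Prop :=
  IsQuasiMetric ρ ∧ ∀ x y z, ρ x y ≤ max (ρ x z) (ρ z y)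

/-- The topology induced by a quasi-metric: the balls `B_ρ(x, r)` form a base. -/
def quasiMetricTop {X : Type*} (ρ : X → X → ℝ) : TopologicalSpace X :=
  TopologicalSpace.generateFrom
    {B : Set X | ∃ x : X, ∃ r : ℝ, 0 < r ∧ B = {y : X | ρ x y < r}}

/-- A topology is quasi-metrizable if it is induced by some quasi-metric. -/
def QuasiMetrizableTop {X : Type*} (t : TopologicalSpace X) : Prop :=
  ∃ ρ : X → X → ℝ, IsQuasiMetric ρ ∧ t = quasiMetricTop ρ

/-- A topology is non-archimedeanly quasi-metrizable if it is induced by some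
non-archimedean quasi-metric. -/
def NAQuasiMetrizableTop {X : Type*} (t : TopologicalSpace X) : Prop :=
  ∃ ρ : X → X → ℝ, IsNAQuasiMetric ρ ∧ t = quasiMetricTop ρ

open Topology TopologicalSpace

/-! ### Neighborhood characterizations of the generated topologies -/

theorem sorg_isOpen_iff {U : Set ℝ} :
    IsOpen[sorgenfreyTop] U ↔ ∀ x ∈ U, ∃ δ > 0, Ico x (x + δ) ⊆ U := by
  constructor
  · intro h
    have h' : GenerateOpen {S : Set ℝ | ∃ a b : ℝ, S = Set.Ico a b} U := h
    clear h
    induction h' with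
    | basic S hS =>
      rcases hS with ⟨a, b, rfl⟩
      intro x hx
      exact ⟨b - x, by linarith [hx.1, hx.2],
        fun y hy => ⟨le_trans hx.1 hy.1, by linarith [hy.2]⟩⟩
    | univ => exact fun x _ => ⟨1, one_pos, fun y _ => trivial⟩
    | inter s t _ _ ihs iht =>
      intro x hx
      obtain ⟨δ₁, h1, hs⟩ := ihs x hx.1
      obtain ⟨δ₂, h2, ht⟩ := iht x hx.2
      refine ⟨min δ₁ δ₂, lt_min h1 h2, fun y hy => ⟨hs ⟨hy.1, ?_⟩, ht ⟨hy.1, ?_⟩⟩⟩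
      · exact lt_of_lt_of_le hy.2 (by simp [min_le_left])
      · exact lt_of_lt_of_le hy.2 (by simp [min_le_right])
    | sUnion S hS ih =>
      intro x hx
      rcases hx with ⟨s, hsS, hxs⟩
      obtain ⟨δ, hδ, hsub⟩ := ih s hsS x hxs
      exact ⟨δ, hδ, hsub.trans (subset_sUnion_of_mem hsS)⟩
  · intro h
    letI := sorgenfreyTop
    rw [isOpen_iff_forall_mem_open]
    intro x hx
    obtain ⟨δ, hδ, hsub⟩ := h x hx
    exact ⟨Ico x (x + δ), hsub, isOpen_generateFrom_of_mem ⟨x, x + δ, rfl⟩,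
      ⟨le_refl x, by linarith⟩⟩

theorem sorgL_isOpen_iff {U : Set ℝ} :
    IsOpen[sorgenfreyLeftTop] U ↔ ∀ x ∈ U, ∃ δ > 0, Ioc (x - δ) x ⊆ U := by
  constructor
  · intro h
    have h' : GenerateOpen {S : Set ℝ | ∃ a b : ℝ, S = Set.Ioc a b} U := h
    clear h
    induction h' with
    | basic S hS =>
      rcases hS with ⟨a, b, rfl⟩
      intro x hx
      exact ⟨x - a, by linarith [hx.1, hx.2],
        fun y hy => ⟨by linarith [hy.1], le_trans hy.2 hx.2⟩⟩
    | univ => exact fun x _ => ⟨1, one_pos, fun y _ => trivial⟩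
    | inter s t _ _ ihs iht =>
      intro x hx
      obtain ⟨δ₁, h1, hs⟩ := ihs x hx.1
      obtain ⟨δ₂, h2, ht⟩ := iht x hx.2
      refine ⟨min δ₁ δ₂, lt_min h1 h2, fun y hy => ⟨hs ⟨?_, hy.2⟩, ht ⟨?_, hy.2⟩⟩⟩
      · have h3 := min_le_left δ₁ δ₂
        exact lt_of_le_of_lt (by linarith) hy.1
      · have h4 := min_le_right δ₁ δ₂
        exact lt_of_le_of_lt (by linarith) hy.1
    | sUnion S hS ih =>
      intro x hx
      rcases hx with ⟨s, hsS, hxs⟩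
      obtain ⟨δ, hδ, hsub⟩ := ih s hsS x hxs
      exact ⟨δ, hδ, hsub.trans (subset_sUnion_of_mem hsS)⟩
  · intro h
    letI := sorgenfreyLeftTop
    rw [isOpen_iff_forall_mem_open]
    intro x hx
    obtain ⟨δ, hδ, hsub⟩ := h x hx
    exact ⟨Ioc (x - δ) x, hsub, isOpen_generateFrom_of_mem ⟨x - δ, x, rfl⟩,
      ⟨by linarith, le_refl x⟩⟩

theorem sorgL_isClosed_iff {F : Set ℝ} :
    IsClosed[sorgenfreyLeftTop] F ↔
      ∀ x, x ∉ F → ∃ δ > 0, ∀ z ∈ F, ¬(x - δ < z ∧ z ≤ x) := by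
  letI := sorgenfreyLeftTop
  rw [← isOpen_compl_iff, sorgL_isOpen_iff]
  constructor
  · intro h x hx
    obtain ⟨δ, hδ, hsub⟩ := h x hx
    exact ⟨δ, hδ, fun z hz hmem => hsub ⟨hmem.1, hmem.2⟩ hz⟩
  · intro h x hx
    obtain ⟨δ, hδ, hgood⟩ := h x hx
    exact ⟨δ, hδ, fun z hz hzF => hgood z hzF ⟨hz.1, hz.2⟩⟩

theorem sorg_isClosed_iff {F : Set ℝ} :
    IsClosed[sorgenfreyTop] F ↔
      ∀ x, x ∉ F → ∃ δ > 0, ∀ z ∈ F, ¬(x ≤ z ∧ z < x + δ) := by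
  letI := sorgenfreyTop
  rw [← isOpen_compl_iff, sorg_isOpen_iff]
  constructor
  · intro h x hx
    obtain ⟨δ, hδ, hsub⟩ := h x hx
    exact ⟨δ, hδ, fun z hz hmem => hsub ⟨hmem.1, hmem.2⟩ hz⟩
  · intro h x hx
    obtain ⟨δ, hδ, hgood⟩ := h x hx
    exact ⟨δ, hδ, fun z hz hzF => hgood z hzF ⟨hz.1, hz.2⟩⟩

theorem qm_isOpen_iff {X : Type*} {ρ : X → X → ℝ} (hρ : IsQuasiMetric ρ) {U : Set X} :
    IsOpen[quasiMetricTop ρ] U ↔ ∀ x ∈ U, ∃ r > 0, {y | ρ x y < r} ⊆ U := by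
  constructor
  · intro h
    have h' : GenerateOpen {B : Set X | ∃ x : X, ∃ r : ℝ, 0 < r ∧ B = {y : X | ρ x y < r}} U := h
    clear h
    induction h' with
    | basic S hS =>
      rcases hS with ⟨z, s, hs, rfl⟩
      intro x hx
      refine ⟨s - ρ z x, by simpa using hx, fun y hy => ?_⟩
      have := hρ.2.2 z y x
      simp only [mem_setOf_eq] at hy hx ⊢
      linarith
    | univ => exact fun x _ => ⟨1, one_pos, fun y _ => trivial⟩
    | inter s t _ _ ihs iht =>
      intro x hx
      obtain ⟨δ₁, h1, hs⟩ := ihs x hx.1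
      obtain ⟨δ₂, h2, ht⟩ := iht x hx.2
      refine ⟨min δ₁ δ₂, lt_min h1 h2, fun y hy => ⟨hs ?_, ht ?_⟩⟩
      · exact lt_of_lt_of_le (show ρ x y < min δ₁ δ₂ from hy) (min_le_left _ _)
      · exact lt_of_lt_of_le (show ρ x y < min δ₁ δ₂ from hy) (min_le_right _ _)
    | sUnion S hS ih =>
      intro x hx
      rcases hx with ⟨s, hsS, hxs⟩
      obtain ⟨δ, hδ, hsub⟩ := ih s hsS x hxs
      exact ⟨δ, hδ, hsub.trans (subset_sUnion_of_mem hsS)⟩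
  · intro h
    letI := quasiMetricTop ρ
    rw [isOpen_iff_forall_mem_open]
    intro x hx
    obtain ⟨r, hr, hsub⟩ := h x hx
    exact ⟨{y | ρ x y < r}, hsub, isOpen_generateFrom_of_mem ⟨x, r, hr, rfl⟩,
      by simp [(hρ.2.1 x x).mpr rfl, hr]⟩

/-! ### Neighborhood characterization of the hybrid topology (A₂ = ∅) -/

theorem cover_cases {A₁ A₃ A₄ : Set ℝ} (hcov : Is4Cover A₁ ∅ A₃ A₄) (x : ℝ) :
    x ∈ A₁ ∨ x ∈ A₃ ∨ x ∈ A₄ := by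
  have hx : x ∈ A₁ ∪ ∅ ∪ A₃ ∪ A₄ := hcov.1 ▸ mem_univ x
  simpa [or_assoc] using hx

theorem hybrid_isOpen_iff {A₁ A₃ A₄ : Set ℝ} (hcov : Is4Cover A₁ ∅ A₃ A₄) {U : Set ℝ} :
    IsOpen[hybridTop A₁ ∅ A₃ A₄] U ↔ ∀ x ∈ U,
      (x ∈ A₁ → ∃ ε > 0, Ioo (x - ε) (x + ε) ⊆ U) ∧
      (x ∈ A₃ → ∃ ε > 0, Ico x (x + ε) ⊆ U) ∧
      (x ∈ A₄ → ∃ ε > 0, Ioc (x - ε) x ⊆ U) := by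
  have d13 : Disjoint A₁ A₃ := hcov.2.2.1
  have d14 : Disjoint A₁ A₄ := hcov.2.2.2.1
  have d34 : Disjoint A₃ A₄ := hcov.2.2.2.2.2.2
  constructor
  · intro h
    have h' : GenerateOpen
      ({S : Set ℝ | ∃ x ∈ A₁, ∃ ε : ℝ, 0 < ε ∧ S = Set.Ioo (x - ε) (x + ε)} ∪
       {S : Set ℝ | ∃ x ∈ (∅ : Set ℝ), S = {x}} ∪
       {S : Set ℝ | ∃ x ∈ A₃, ∃ ε : ℝ, 0 < ε ∧ S = Set.Ico x (x + ε)} ∪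
       {S : Set ℝ | ∃ x ∈ A₄, ∃ ε : ℝ, 0 < ε ∧ S = Set.Ioc (x - ε) x}) U := h
    clear h
    induction h' with
    | basic S hS =>
      rcases hS with (((⟨c, hc, ε, hε, rfl⟩ | ⟨c, hc, _⟩) | ⟨c, hc, ε, hε, rfl⟩) |
        ⟨c, hc, ε, hε, rfl⟩)
      · -- S = Ioo (c-ε) (c+ε), c ∈ A₁
        intro x hx
        obtain ⟨hx1, hx2⟩ := hx
        refine ⟨fun _ => ⟨min (x - (c - ε)) (c + ε - x), lt_min (by linarith) (by linarith), ?_⟩,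
          fun _ => ⟨c + ε - x, by linarith, ?_⟩, fun _ => ⟨x - (c - ε), by linarith, ?_⟩⟩
        · intro y hy
          have l := min_le_left (x - (c - ε)) (c + ε - x)
          have r := min_le_right (x - (c - ε)) (c + ε - x)
          exact ⟨by linarith [hy.1], by linarith [hy.2]⟩
        · exact fun y hy => ⟨by linarith [hy.1], by linarith [hy.2]⟩
        · exact fun y hy => ⟨by linarith [hy.1], by linarith [hy.2]⟩
      · exact absurd hc (Set.notMem_empty c)
      · -- S = Ico c (c+ε), c ∈ A₃
        intro x hx
        obtain ⟨hx1, hx2⟩ := hx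
        refine ⟨fun h1 => ?_, fun h3 => ⟨c + ε - x, by linarith, fun y hy =>
            ⟨le_trans hx1 hy.1, by linarith [hy.2]⟩⟩, fun h4 => ?_⟩
        · have hne : x ≠ c := fun h => (disjoint_left.mp d13) h1 (h ▸ hc)
          have hgt : c < x := lt_of_le_of_ne hx1 (Ne.symm hne)
          refine ⟨min (x - c) (c + ε - x), lt_min (by linarith) (by linarith), fun y hy => ?_⟩
          have l := min_le_left (x - c) (c + ε - x)
          have r := min_le_right (x - c) (c + ε - x)
          exact ⟨by linarith [hy.1], by linarith [hy.2]⟩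
        · have hne : x ≠ c := fun h => (disjoint_left.mp d34) (h ▸ hc) h4
          have hgt : c < x := lt_of_le_of_ne hx1 (Ne.symm hne)
          exact ⟨x - c, by linarith, fun y hy => ⟨by linarith [hy.1], by linarith [hy.2]⟩⟩
      · -- S = Ioc (c-ε) c, c ∈ A₄
        intro x hx
        obtain ⟨hx1, hx2⟩ := hx
        refine ⟨fun h1 => ?_, fun h3 => ?_, fun h4 =>
          ⟨x - (c - ε), by linarith, fun y hy => ⟨by linarith [hy.1], le_trans hy.2 hx2⟩⟩⟩
        · have hne : x ≠ c := fun h => (disjoint_left.mp d14) h1 (h ▸ hc)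
          have hlt : x < c := lt_of_le_of_ne hx2 hne
          refine ⟨min (x - (c - ε)) (c - x), lt_min (by linarith) (by linarith), fun y hy => ?_⟩
          have l := min_le_left (x - (c - ε)) (c - x)
          have r := min_le_right (x - (c - ε)) (c - x)
          exact ⟨by linarith [hy.1], by linarith [hy.2]⟩
        · have hne : x ≠ c := fun h => (disjoint_left.mp d34) h3 (h ▸ hc)
          have hlt : x < c := lt_of_le_of_ne hx2 hne
          exact ⟨c - x, by linarith, fun y hy => ⟨by linarith [hy.1], by linarith [hy.2]⟩⟩
    | univ =>
      exact fun x _ => ⟨fun _ => ⟨1, one_pos, fun y _ => trivial⟩,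
        fun _ => ⟨1, one_pos, fun y _ => trivial⟩, fun _ => ⟨1, one_pos, fun y _ => trivial⟩⟩
    | inter s t hs ht ihs iht =>
      intro x hx
      obtain ⟨hs1, hs3, hs4⟩ := ihs x hx.1
      obtain ⟨ht1, ht3, ht4⟩ := iht x hx.2
      refine ⟨fun h1 => ?_, fun h3 => ?_, fun h4 => ?_⟩
      · obtain ⟨ε₁, he1, hsub1⟩ := hs1 h1
        obtain ⟨ε₂, he2, hsub2⟩ := ht1 h1
        have l := min_le_left ε₁ ε₂
        have r := min_le_right ε₁ ε₂
        exact ⟨min ε₁ ε₂, lt_min he1 he2, fun y hy =>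
          ⟨hsub1 ⟨by linarith [hy.1], by linarith [hy.2]⟩,
           hsub2 ⟨by linarith [hy.1], by linarith [hy.2]⟩⟩⟩
      · obtain ⟨ε₁, he1, hsub1⟩ := hs3 h3
        obtain ⟨ε₂, he2, hsub2⟩ := ht3 h3
        have l := min_le_left ε₁ ε₂
        have r := min_le_right ε₁ ε₂
        exact ⟨min ε₁ ε₂, lt_min he1 he2, fun y hy =>
          ⟨hsub1 ⟨hy.1, by linarith [hy.2]⟩, hsub2 ⟨hy.1, by linarith [hy.2]⟩⟩⟩
      · obtain ⟨ε₁, he1, hsub1⟩ := hs4 h4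
        obtain ⟨ε₂, he2, hsub2⟩ := ht4 h4
        have l := min_le_left ε₁ ε₂
        have r := min_le_right ε₁ ε₂
        exact ⟨min ε₁ ε₂, lt_min he1 he2, fun y hy =>
          ⟨hsub1 ⟨by linarith [hy.1], hy.2⟩, hsub2 ⟨by linarith [hy.1], hy.2⟩⟩⟩
    | sUnion S hS ih =>
      intro x hx
      rcases hx with ⟨s, hsS, hxs⟩
      obtain ⟨g1, g3, g4⟩ := ih s hsS x hxs
      refine ⟨fun h1 => ?_, fun h3 => ?_, fun h4 => ?_⟩
      · obtain ⟨ε, hε, hsub⟩ := g1 h1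
        exact ⟨ε, hε, hsub.trans (subset_sUnion_of_mem hsS)⟩
      · obtain ⟨ε, hε, hsub⟩ := g3 h3
        exact ⟨ε, hε, hsub.trans (subset_sUnion_of_mem hsS)⟩
      · obtain ⟨ε, hε, hsub⟩ := g4 h4
        exact ⟨ε, hε, hsub.trans (subset_sUnion_of_mem hsS)⟩
  · intro h
    letI := hybridTop A₁ ∅ A₃ A₄
    rw [isOpen_iff_forall_mem_open]
    intro x hx
    rcases cover_cases hcov x with h1 | h3 | h4
    · obtain ⟨ε, hε, hsub⟩ := (h x hx).1 h1
      exact ⟨Ioo (x - ε) (x + ε), hsub,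
        isOpen_generateFrom_of_mem (Or.inl (Or.inl (Or.inl ⟨x, h1, ε, hε, rfl⟩))),
        by constructor <;> linarith⟩
    · obtain ⟨ε, hε, hsub⟩ := (h x hx).2.1 h3
      exact ⟨Ico x (x + ε), hsub,
        isOpen_generateFrom_of_mem (Or.inl (Or.inr ⟨x, h3, ε, hε, rfl⟩)),
        ⟨le_refl x, by linarith⟩⟩
    · obtain ⟨ε, hε, hsub⟩ := (h x hx).2.2 h4
      exact ⟨Ioc (x - ε) x, hsub,
        isOpen_generateFrom_of_mem (Or.inr ⟨x, h4, ε, hε, rfl⟩),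
        ⟨by linarith, le_refl x⟩⟩

theorem hybrid_isOpen_Ioo {A₁ A₃ A₄ : Set ℝ} (hcov : Is4Cover A₁ ∅ A₃ A₄) (a b : ℝ) :
    IsOpen[hybridTop A₁ ∅ A₃ A₄] (Ioo a b) := by
  rw [hybrid_isOpen_iff hcov]
  intro x hx
  obtain ⟨hx1, hx2⟩ := hx
  refine ⟨fun _ => ⟨min (x - a) (b - x), lt_min (by linarith) (by linarith), fun y hy => ?_⟩,
    fun _ => ⟨b - x, by linarith, fun y hy => ⟨by linarith [hy.1], by linarith [hy.2]⟩⟩,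
    fun _ => ⟨x - a, by linarith, fun y hy => ⟨by linarith [hy.1], by linarith [hy.2]⟩⟩⟩
  have l := min_le_left (x - a) (b - x)
  have r := min_le_right (x - a) (b - x)
  exact ⟨by linarith [hy.1], by linarith [hy.2]⟩

theorem hybrid_isOpen_Ico {A₁ A₃ A₄ : Set ℝ} (hcov : Is4Cover A₁ ∅ A₃ A₄) {c b : ℝ}
    (hc : c ∈ A₃) : IsOpen[hybridTop A₁ ∅ A₃ A₄] (Ico c b) := by
  have d13 : Disjoint A₁ A₃ := hcov.2.2.1
  have d34 : Disjoint A₃ A₄ := hcov.2.2.2.2.2.2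
  rw [hybrid_isOpen_iff hcov]
  intro x hx
  obtain ⟨hx1, hx2⟩ := hx
  refine ⟨fun h1 => ?_, fun _ => ⟨b - x, by linarith, fun y hy =>
      ⟨le_trans hx1 hy.1, by linarith [hy.2]⟩⟩, fun h4 => ?_⟩
  · have hne : x ≠ c := fun h => (disjoint_left.mp d13) h1 (h ▸ hc)
    have hgt : c < x := lt_of_le_of_ne hx1 (Ne.symm hne)
    refine ⟨min (x - c) (b - x), lt_min (by linarith) (by linarith), fun y hy => ?_⟩
    have l := min_le_left (x - c) (b - x)
    have r := min_le_right (x - c) (b - x)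
    exact ⟨by linarith [hy.1], by linarith [hy.2]⟩
  · have hne : x ≠ c := fun h => (disjoint_left.mp d34) (h ▸ hc) h4
    have hgt : c < x := lt_of_le_of_ne hx1 (Ne.symm hne)
    exact ⟨x - c, by linarith, fun y hy => ⟨by linarith [hy.1], by linarith [hy.2]⟩⟩

theorem hybrid_isOpen_Ioc {A₁ A₃ A₄ : Set ℝ} (hcov : Is4Cover A₁ ∅ A₃ A₄) {a c : ℝ}
    (hc : c ∈ A₄) : IsOpen[hybridTop A₁ ∅ A₃ A₄] (Ioc a c) := by
  have d14 : Disjoint A₁ A₄ := hcov.2.2.2.1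
  have d34 : Disjoint A₃ A₄ := hcov.2.2.2.2.2.2
  rw [hybrid_isOpen_iff hcov]
  intro x hx
  obtain ⟨hx1, hx2⟩ := hx
  refine ⟨fun h1 => ?_, fun h3 => ?_, fun _ =>
    ⟨x - a, by linarith, fun y hy => ⟨by linarith [hy.1], le_trans hy.2 hx2⟩⟩⟩
  · have hne : x ≠ c := fun h => (disjoint_left.mp d14) h1 (h ▸ hc)
    have hlt : x < c := lt_of_le_of_ne hx2 hne
    refine ⟨min (x - a) (c - x), lt_min (by linarith) (by linarith), fun y hy => ?_⟩
    have l := min_le_left (x - a) (c - x)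
    have r := min_le_right (x - a) (c - x)
    exact ⟨by linarith [hy.1], by linarith [hy.2]⟩
  · have hne : x ≠ c := fun h => (disjoint_left.mp d34) h3 (h ▸ hc)
    have hlt : x < c := lt_of_le_of_ne hx2 hne
    exact ⟨c - x, by linarith, fun y hy => ⟨by linarith [hy.1], by linarith [hy.2]⟩⟩

/-! ### Necessity -/

def ClL (S : Set ℝ) : Set ℝ := {y | ∀ δ > 0, ∃ z ∈ S, y - δ < z ∧ z ≤ y}

def ClR (S : Set ℝ) : Set ℝ := {y | ∀ δ > 0, ∃ z ∈ S, y ≤ z ∧ z < y + δ}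

theorem subset_ClL (S : Set ℝ) : S ⊆ ClL S :=
  fun y hy δ hδ => ⟨y, hy, by linarith, le_refl y⟩

theorem subset_ClR (S : Set ℝ) : S ⊆ ClR S :=
  fun y hy δ hδ => ⟨y, hy, le_refl y, by linarith⟩

theorem isClosed_ClL (S : Set ℝ) : IsClosed[sorgenfreyLeftTop] (ClL S) := by
  rw [sorgL_isClosed_iff]
  intro x hx
  by_contra hcon
  push_neg at hcon
  apply hx
  intro δ hδ
  obtain ⟨z', hz', h1, h2⟩ := hcon (δ / 2) (by linarith)
  obtain ⟨z, hz, g1, g2⟩ := hz' (δ / 2) (by linarith)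
  exact ⟨z, hz, by linarith, le_trans g2 h2⟩

theorem isClosed_ClR (S : Set ℝ) : IsClosed[sorgenfreyTop] (ClR S) := by
  rw [sorg_isClosed_iff]
  intro x hx
  by_contra hcon
  push_neg at hcon
  apply hx
  intro δ hδ
  obtain ⟨z', hz', h1, h2⟩ := hcon (δ / 2) (by linarith)
  obtain ⟨z, hz, g1, g2⟩ := hz' (δ / 2) (by linarith)
  exact ⟨z, hz, le_trans h1 g1, by linarith⟩

theorem necessity {A₁ A₃ A₄ : Set ℝ} (hcov : Is4Cover A₁ ∅ A₃ A₄)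
    (hq : QuasiMetrizableTop (hybridTop A₁ ∅ A₃ A₄)) :
    (∃ F : ℕ → Set ℝ, (∀ n, @IsClosed ℝ sorgenfreyLeftTop (F n)) ∧ A₃ = ⋃ n, F n) ∧
      (∃ H : ℕ → Set ℝ, (∀ n, @IsClosed ℝ sorgenfreyTop (H n)) ∧ A₄ = ⋃ n, H n) := by
  obtain ⟨ρ, hρ, htop⟩ := hq
  have hρ0 : ∀ x, ρ x x = 0 := fun x => (hρ.2.1 x x).mpr rfl
  have half_pos' : ∀ m : ℕ, (0:ℝ) < (1/2) ^ m := fun m => by positivity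
  have half_succ : ∀ m : ℕ, ((1:ℝ)/2) ^ (m+1) = (1/2)^m * (1/2) := fun m => pow_succ _ _
  have hball : ∀ z : ℝ, ∀ r : ℝ, 0 < r → IsOpen[hybridTop A₁ ∅ A₃ A₄] {y | ρ z y < r} := by
    intro z r hr
    rw [htop]
    exact TopologicalSpace.isOpen_generateFrom_of_mem ⟨z, r, hr, rfl⟩
  have hnbhd : ∀ U : Set ℝ, IsOpen[hybridTop A₁ ∅ A₃ A₄] U →
      ∀ x ∈ U, ∃ r > 0, {y | ρ x y < r} ⊆ U := by
    intro U hU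
    rw [htop] at hU
    exact (qm_isOpen_iff hρ).1 hU
  constructor
  · -- A₃ is F_σ in 𝕊←
    set P : ℕ → ℕ → Set ℝ := fun n k =>
      {z | ({y | ρ z y < (1/2) ^ n} ⊆ Ici z) ∧
        (Ico z (z + (1/2) ^ k) ⊆ {y | ρ z y < (1/2) ^ (n+1)})} with hP
    have hPsub : ∀ n k, P n k ⊆ A₃ := by
      intro n k z hz
      rcases cover_cases hcov z with h1 | h3 | h4
      · exfalso
        obtain ⟨ε, hε, hsub⟩ := (((hybrid_isOpen_iff hcov).1
          (hball z ((1/2)^n) (half_pos' n))) z (by simpa [hρ0] using half_pos' n)).1 h1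
        have hmem : z - ε/2 ∈ {y | ρ z y < (1/2)^n} := hsub ⟨by linarith, by linarith⟩
        have : z ≤ z - ε/2 := hz.1 hmem
        linarith
      · exact h3
      · exfalso
        obtain ⟨ε, hε, hsub⟩ := (((hybrid_isOpen_iff hcov).1
          (hball z ((1/2)^n) (half_pos' n))) z (by simpa [hρ0] using half_pos' n)).2.2 h4
        have : z - ε/2 ∈ {y | ρ z y < (1/2)^n} := hsub ⟨by linarith, by linarith⟩
        have : z ≤ z - ε/2 := hz.1 this
        linarith
    have hPcov : ∀ z ∈ A₃, ∃ n k, z ∈ P n k := by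
      intro z hz
      have hIco : IsOpen[hybridTop A₁ ∅ A₃ A₄] (Ico z (z+1)) := hybrid_isOpen_Ico hcov hz
      obtain ⟨r, hr, hsub⟩ := hnbhd _ hIco z ⟨le_refl z, by linarith⟩
      obtain ⟨n, hn⟩ := exists_pow_lt_of_lt_one hr (by norm_num : (1:ℝ)/2 < 1)
      have hb1 : {y | ρ z y < (1/2)^n} ⊆ Ici z := by
        intro y hy
        have : y ∈ Ico z (z+1) := hsub (by exact lt_trans hy hn)
        exact this.1
      obtain ⟨ε, hε, hsub2⟩ := (((hybrid_isOpen_iff hcov).1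
        (hball z ((1/2)^(n+1)) (half_pos' (n+1)))) z (by simpa [hρ0] using half_pos' (n+1))).2.1 hz
      obtain ⟨k, hk⟩ := exists_pow_lt_of_lt_one hε (by norm_num : (1:ℝ)/2 < 1)
      refine ⟨n, k, hb1, fun y hy => hsub2 ⟨hy.1, lt_of_lt_of_le hy.2 (by linarith [hk])⟩⟩
    have hPcl : ∀ n k, ClL (P n k) ⊆ A₃ := by
      intro n k y hy
      by_contra hyA
      have hy14 : y ∈ A₁ ∨ y ∈ A₄ := by
        rcases cover_cases hcov y with h | h | h
        · exact Or.inl h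
        · exact absurd h hyA
        · exact Or.inr h
      -- get δ' with Ioc (y - δ') y ⊆ ball y (1/2)^(n+1)
      have hyball := ((hybrid_isOpen_iff hcov).1 (hball y ((1/2)^(n+1)) (half_pos' (n+1)))) y
        (by simpa [hρ0] using half_pos' (n+1))
      obtain ⟨δ', hδ', hsubδ⟩ : ∃ δ' > 0, Ioc (y - δ') y ⊆ {w | ρ y w < (1/2)^(n+1)} := by
        rcases hy14 with h1 | h4
        · obtain ⟨ε, hε, hsub⟩ := hyball.1 h1
          exact ⟨ε, hε, fun w hw => hsub ⟨hw.1, by linarith [hw.2]⟩⟩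
        · exact hyball.2.2 h4
      obtain ⟨z, hzP, hz1, hz2⟩ := hy (min δ' ((1/2)^(k+1)))
        (lt_min hδ' (half_pos' (k+1)))
      have hzA3 : z ∈ A₃ := hPsub n k hzP
      have hzy : z < y := lt_of_le_of_ne hz2 (fun h => hyA (h ▸ hzA3))
      have hmin1 : min δ' ((1/2)^(k+1)) ≤ δ' := min_le_left _ _
      have hmin2 : min δ' ((1/2)^(k+1)) ≤ (1/2)^(k+1) := min_le_right _ _
      -- y ∈ Ico z (z + (1/2)^k)
      have hρzy : ρ z y < (1/2)^(n+1) := by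
        apply hzP.2
        constructor
        · exact hz2
        · have := half_succ k
          have := half_pos' (k+1)
          nlinarith [hz1]
      -- pick w strictly between y - δ' and z
      set w := ((y - δ') + z) / 2 with hw
      have hw1 : y - δ' < w := by
        have : y - δ' < z := by linarith [hz1]
        simp only [hw]; linarith
      have hw2 : w < z := by
        have : y - δ' < z := by linarith [hz1]
        simp only [hw]; linarith
      have hρyw : ρ y w < (1/2)^(n+1) := hsubδ ⟨hw1, by linarith⟩
      have htri := hρ.2.2 z w y
      have hρzw : ρ z w < (1/2)^n := by
        have := half_succ n
        linarith
      have : z ≤ w := hzP.1 hρzw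
      linarith
    refine ⟨fun m => ClL (P (Nat.unpair m).1 (Nat.unpair m).2),
      fun m => isClosed_ClL _, ?_⟩
    apply Subset.antisymm
    · intro z hz
      obtain ⟨n, k, hnk⟩ := hPcov z hz
      exact mem_iUnion.mpr ⟨Nat.pair n k, by
        simpa [Nat.unpair_pair] using subset_ClL _ hnk⟩
    · intro z hz
      obtain ⟨m, hm⟩ := mem_iUnion.mp hz
      exact hPcl _ _ hm
  · -- A₄ is F_σ in 𝕊
    set Q : ℕ → ℕ → Set ℝ := fun n k =>
      {z | ({y | ρ z y < (1/2) ^ n} ⊆ Iic z) ∧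
        (Ioc (z - (1/2) ^ k) z ⊆ {y | ρ z y < (1/2) ^ (n+1)})} with hQ
    have hQsub : ∀ n k, Q n k ⊆ A₄ := by
      intro n k z hz
      rcases cover_cases hcov z with h1 | h3 | h4
      · exfalso
        obtain ⟨ε, hε, hsub⟩ := (((hybrid_isOpen_iff hcov).1
          (hball z ((1/2)^n) (half_pos' n))) z (by simpa [hρ0] using half_pos' n)).1 h1
        have : z + ε/2 ∈ {y | ρ z y < (1/2)^n} := hsub ⟨by linarith, by linarith⟩
        have : z + ε/2 ≤ z := hz.1 this
        linarith
      · exfalso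
        obtain ⟨ε, hε, hsub⟩ := (((hybrid_isOpen_iff hcov).1
          (hball z ((1/2)^n) (half_pos' n))) z (by simpa [hρ0] using half_pos' n)).2.1 h3
        have : z + ε/2 ∈ {y | ρ z y < (1/2)^n} := hsub ⟨by linarith, by linarith⟩
        have : z + ε/2 ≤ z := hz.1 this
        linarith
      · exact h4
    have hQcov : ∀ z ∈ A₄, ∃ n k, z ∈ Q n k := by
      intro z hz
      have hIoc : IsOpen[hybridTop A₁ ∅ A₃ A₄] (Ioc (z-1) z) := hybrid_isOpen_Ioc hcov hz
      obtain ⟨r, hr, hsub⟩ := hnbhd _ hIoc z ⟨by linarith, le_refl z⟩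
      obtain ⟨n, hn⟩ := exists_pow_lt_of_lt_one hr (by norm_num : (1:ℝ)/2 < 1)
      have hb1 : {y | ρ z y < (1/2)^n} ⊆ Iic z := by
        intro y hy
        have : y ∈ Ioc (z-1) z := hsub (by exact lt_trans hy hn)
        exact this.2
      obtain ⟨ε, hε, hsub2⟩ := (((hybrid_isOpen_iff hcov).1
        (hball z ((1/2)^(n+1)) (half_pos' (n+1)))) z (by simpa [hρ0] using half_pos' (n+1))).2.2 hz
      obtain ⟨k, hk⟩ := exists_pow_lt_of_lt_one hε (by norm_num : (1:ℝ)/2 < 1)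
      refine ⟨n, k, hb1, fun y hy => hsub2 ⟨lt_of_le_of_lt (by linarith [hk]) hy.1, hy.2⟩⟩
    have hQcl : ∀ n k, ClR (Q n k) ⊆ A₄ := by
      intro n k y hy
      by_contra hyA
      have hy13 : y ∈ A₁ ∨ y ∈ A₃ := by
        rcases cover_cases hcov y with h | h | h
        · exact Or.inl h
        · exact Or.inr h
        · exact absurd h hyA
      have hyball := ((hybrid_isOpen_iff hcov).1 (hball y ((1/2)^(n+1)) (half_pos' (n+1)))) y
        (by simpa [hρ0] using half_pos' (n+1))
      obtain ⟨δ', hδ', hsubδ⟩ : ∃ δ' > 0, Ico y (y + δ') ⊆ {w | ρ y w < (1/2)^(n+1)} := by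
        rcases hy13 with h1 | h3
        · obtain ⟨ε, hε, hsub⟩ := hyball.1 h1
          exact ⟨ε, hε, fun w hw => hsub ⟨by linarith [hw.1], hw.2⟩⟩
        · exact hyball.2.1 h3
      obtain ⟨z, hzQ, hz1, hz2⟩ := hy (min δ' ((1/2)^(k+1)))
        (lt_min hδ' (half_pos' (k+1)))
      have hzA4 : z ∈ A₄ := hQsub n k hzQ
      have hzy : y < z := lt_of_le_of_ne hz1 (fun h => hyA (h ▸ hzA4))
      have hmin1 : min δ' ((1/2)^(k+1)) ≤ δ' := min_le_left _ _
      have hmin2 : min δ' ((1/2)^(k+1)) ≤ (1/2)^(k+1) := min_le_right _ _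
      have hρzy : ρ z y < (1/2)^(n+1) := by
        apply hzQ.2
        constructor
        · have := half_succ k
          have := half_pos' (k+1)
          nlinarith [hz2]
        · exact hz1
      set w := ((y + δ') + z) / 2 with hw
      have hw1 : w < y + δ' := by
        have : z < y + δ' := by linarith [hz2]
        simp only [hw]; linarith
      have hw2 : z < w := by
        have : z < y + δ' := by linarith [hz2]
        simp only [hw]; linarith
      have hρyw : ρ y w < (1/2)^(n+1) := hsubδ ⟨by linarith, hw1⟩
      have htri := hρ.2.2 z w y
      have hρzw : ρ z w < (1/2)^n := by
        have := half_succ n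
        linarith
      have : w ≤ z := hzQ.1 hρzw
      linarith
    refine ⟨fun m => ClR (Q (Nat.unpair m).1 (Nat.unpair m).2),
      fun m => isClosed_ClR _, ?_⟩
    apply Subset.antisymm
    · intro z hz
      obtain ⟨n, k, hnk⟩ := hQcov z hz
      exact mem_iUnion.mpr ⟨Nat.pair n k, by
        simpa [Nat.unpair_pair] using subset_ClR _ hnk⟩
    · intro z hz
      obtain ⟨m, hm⟩ := mem_iUnion.mp hz
      exact hQcl _ _ hm

/-! ### Sufficiency: barrier functions -/

noncomputable def lbar (F : ℕ → Set ℝ) (n : ℕ) (x : ℝ) : ℝ :=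
  sSup ({((⌈x * 2 ^ n⌉ : ℝ) - 1) / 2 ^ n} ∪ {f | f ∈ F n ∧ f < x})

noncomputable def rbar (H : ℕ → Set ℝ) (n : ℕ) (x : ℝ) : ℝ :=
  sInf ({((⌊x * 2 ^ n⌋ : ℝ) + 1) / 2 ^ n} ∪ {h | h ∈ H n ∧ x < h})

section Barrier

variable {F H : ℕ → Set ℝ} {n : ℕ} {x y : ℝ}

theorem two_pow_pos (n : ℕ) : (0:ℝ) < 2 ^ n := by positivity

theorem g0_lt (n : ℕ) (x : ℝ) : ((⌈x * 2 ^ n⌉ : ℝ) - 1) / 2 ^ n < x := by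
  have h2 := two_pow_pos n
  rw [div_lt_iff₀ h2]
  have := Int.ceil_lt_add_one (x * 2 ^ n)
  linarith

theorem g0_ge (n : ℕ) (x : ℝ) : x - 1 / 2 ^ n ≤ ((⌈x * 2 ^ n⌉ : ℝ) - 1) / 2 ^ n := by
  have h2 := two_pow_pos n
  have heq : x - 1 / 2 ^ n = (x * 2 ^ n - 1) / 2 ^ n := by field_simp
  rw [heq]
  exact (div_le_div_iff_of_pos_right h2).mpr (by linarith [Int.le_ceil (x * 2 ^ n)])

theorem gridle (n : ℕ) (x : ℝ) (k : ℤ) (hk : (k : ℝ) / 2 ^ n < x) :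
    (k : ℝ) / 2 ^ n ≤ ((⌈x * 2 ^ n⌉ : ℝ) - 1) / 2 ^ n := by
  have h2 := two_pow_pos n
  apply (div_le_div_iff_of_pos_right h2).mpr
  have h1 : (k : ℝ) < x * 2 ^ n := (div_lt_iff₀ h2).mp hk
  have h3 : k < ⌈x * 2 ^ n⌉ := Int.lt_ceil.mpr h1
  have h4 : k ≤ ⌈x * 2 ^ n⌉ - 1 := by omega
  calc (k:ℝ) ≤ ((⌈x * 2 ^ n⌉ - 1 : ℤ) : ℝ) := by exact_mod_cast h4
    _ = (⌈x * 2 ^ n⌉ : ℝ) - 1 := by push_cast; ring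

theorem g1_gt (n : ℕ) (x : ℝ) : x < ((⌊x * 2 ^ n⌋ : ℝ) + 1) / 2 ^ n := by
  have h2 := two_pow_pos n
  rw [lt_div_iff₀ h2]
  have := Int.sub_one_lt_floor (x * 2 ^ n)
  linarith

theorem g1_le (n : ℕ) (x : ℝ) : ((⌊x * 2 ^ n⌋ : ℝ) + 1) / 2 ^ n ≤ x + 1 / 2 ^ n := by
  have h2 := two_pow_pos n
  have heq : x + 1 / 2 ^ n = (x * 2 ^ n + 1) / 2 ^ n := by field_simp
  rw [heq]
  exact (div_le_div_iff_of_pos_right h2).mpr (by linarith [Int.floor_le (x * 2 ^ n)])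

theorem gridge (n : ℕ) (x : ℝ) (k : ℤ) (hk : x < (k : ℝ) / 2 ^ n) :
    ((⌊x * 2 ^ n⌋ : ℝ) + 1) / 2 ^ n ≤ (k : ℝ) / 2 ^ n := by
  have h2 := two_pow_pos n
  apply (div_le_div_iff_of_pos_right h2).mpr
  have h1 : x * 2 ^ n < (k : ℝ) := (lt_div_iff₀ h2).mp hk
  have h3 : ⌊x * 2 ^ n⌋ < k := Int.floor_lt.mpr h1
  have h4 : ⌊x * 2 ^ n⌋ + 1 ≤ k := by omega
  calc (⌊x * 2 ^ n⌋ : ℝ) + 1 = ((⌊x * 2 ^ n⌋ + 1 : ℤ) : ℝ) := by push_cast; ring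
    _ ≤ (k : ℝ) := by exact_mod_cast h4

theorem lbar_bddAbove (F : ℕ → Set ℝ) (n : ℕ) (x : ℝ) :
    BddAbove ({((⌈x * 2 ^ n⌉ : ℝ) - 1) / 2 ^ n} ∪ {f | f ∈ F n ∧ f < x}) := by
  refine ⟨x, fun z hz => ?_⟩
  rcases hz with hz | hz
  · rw [mem_singleton_iff] at hz
    exact hz ▸ (g0_lt n x).le
  · exact hz.2.le

theorem lbar_nonempty (F : ℕ → Set ℝ) (n : ℕ) (x : ℝ) :
    ({((⌈x * 2 ^ n⌉ : ℝ) - 1) / 2 ^ n} ∪ {f | f ∈ F n ∧ f < x}).Nonempty :=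
  ⟨_, Or.inl rfl⟩

theorem rbar_bddBelow (H : ℕ → Set ℝ) (n : ℕ) (x : ℝ) :
    BddBelow ({((⌊x * 2 ^ n⌋ : ℝ) + 1) / 2 ^ n} ∪ {h | h ∈ H n ∧ x < h}) := by
  refine ⟨x, fun z hz => ?_⟩
  rcases hz with hz | hz
  · rw [mem_singleton_iff] at hz
    exact hz ▸ (g1_gt n x).le
  · exact hz.2.le

theorem rbar_nonempty (H : ℕ → Set ℝ) (n : ℕ) (x : ℝ) :
    ({((⌊x * 2 ^ n⌋ : ℝ) + 1) / 2 ^ n} ∪ {h | h ∈ H n ∧ x < h}).Nonempty :=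
  ⟨_, Or.inl rfl⟩

theorem lbar_le (hx : x ∉ F n)
    (hFcl : ∃ δ > 0, ∀ f ∈ F n, ¬(x - δ < f ∧ f ≤ x)) : lbar F n x < x := by
  obtain ⟨δ, hδ, hgood⟩ := hFcl
  have hub : ∀ z ∈ ({((⌈x * 2 ^ n⌉ : ℝ) - 1) / 2 ^ n} ∪ {f | f ∈ F n ∧ f < x}),
      z ≤ max (((⌈x * 2 ^ n⌉ : ℝ) - 1) / 2 ^ n) (x - δ) := by
    intro z hz
    rcases hz with hz | hz
    · rw [mem_singleton_iff] at hz
      exact hz ▸ le_max_left _ _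
    · refine le_trans ?_ (le_max_right _ _)
      by_contra hcon
      push_neg at hcon
      exact hgood z hz.1 ⟨hcon, hz.2.le⟩
  have := csSup_le (lbar_nonempty F n x) hub
  have hg := g0_lt n x
  calc lbar F n x ≤ max (((⌈x * 2 ^ n⌉ : ℝ) - 1) / 2 ^ n) (x - δ) := this
    _ < x := max_lt hg (by linarith)

theorem lbar_ge (F : ℕ → Set ℝ) (n : ℕ) (x : ℝ) : x - 1 / 2 ^ n ≤ lbar F n x :=
  le_trans (g0_ge n x) (le_csSup (lbar_bddAbove F n x) (Or.inl rfl))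

theorem lbar_lt_self (F : ℕ → Set ℝ) (n : ℕ) (x : ℝ) : lbar F n x ≤ x :=
  csSup_le (lbar_nonempty F n x) fun z hz => by
    rcases hz with hz | hz
    · rw [mem_singleton_iff] at hz; exact hz ▸ (g0_lt n x).le
    · exact hz.2.le

theorem lbar_mem_le (hf : y ∈ F n) (hfx : y < x) : y ≤ lbar F n x :=
  le_csSup (lbar_bddAbove F n x) (Or.inr ⟨hf, hfx⟩)

theorem lbar_mono (F : ℕ → Set ℝ) (n : ℕ) (hyx : y ≤ x) : lbar F n y ≤ lbar F n x := by
  apply csSup_le (lbar_nonempty F n y)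
  intro z hz
  rcases hz with hz | hz
  · rw [mem_singleton_iff] at hz
    subst hz
    exact le_trans (by
      apply (div_le_div_iff_of_pos_right (two_pow_pos n)).mpr
      have : (⌈y * 2 ^ n⌉ : ℤ) ≤ ⌈x * 2 ^ n⌉ :=
        Int.ceil_le_ceil (by nlinarith [two_pow_pos n])
      have : ((⌈y * 2 ^ n⌉ : ℤ) : ℝ) ≤ ((⌈x * 2 ^ n⌉ : ℤ) : ℝ) := by exact_mod_cast this
      linarith)
      (le_csSup (lbar_bddAbove F n x) (Or.inl rfl))
  · exact le_csSup (lbar_bddAbove F n x) (Or.inr ⟨hz.1, lt_of_lt_of_le hz.2 hyx⟩)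

theorem lbar_barrier (F : ℕ → Set ℝ) (n : ℕ) (h1 : lbar F n x < y) (h2 : y ≤ x) :
    lbar F n y = lbar F n x := by
  apply le_antisymm (lbar_mono F n h2)
  apply csSup_le (lbar_nonempty F n x)
  intro z hz
  rcases hz with hz | hz
  · rw [mem_singleton_iff] at hz
    subst hz
    have hlt : ((⌈x * 2 ^ n⌉ : ℝ) - 1) / 2 ^ n < y :=
      lt_of_le_of_lt (le_csSup (lbar_bddAbove F n x) (Or.inl rfl)) h1
    refine le_trans ?_ (le_csSup (lbar_bddAbove F n y) (Or.inl rfl))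
    have : ((⌈x * 2 ^ n⌉ : ℝ) - 1) / 2 ^ n = ((⌈x * 2 ^ n⌉ - 1 : ℤ) : ℝ) / 2 ^ n := by
      push_cast; ring
    rw [this] at hlt ⊢
    exact gridle n y _ hlt
  · have hzy : z < y := lt_of_le_of_lt (le_csSup (lbar_bddAbove F n x) (Or.inr hz)) h1
    exact le_csSup (lbar_bddAbove F n y) (Or.inr ⟨hz.1, hzy⟩)

theorem lbar_mono_n (hFn : F n ⊆ F (n+1)) (x : ℝ) : lbar F n x ≤ lbar F (n+1) x := by
  apply csSup_le (lbar_nonempty F n x)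
  intro z hz
  rcases hz with hz | hz
  · rw [mem_singleton_iff] at hz
    subst hz
    refine le_trans ?_ (le_csSup (lbar_bddAbove F (n+1) x) (Or.inl rfl))
    have heq : ((⌈x * 2 ^ n⌉ : ℝ) - 1) / 2 ^ n
        = ((2 * (⌈x * 2 ^ n⌉ - 1) : ℤ) : ℝ) / 2 ^ (n+1) := by
      push_cast
      rw [pow_succ]
      field_simp
    rw [heq]
    exact gridle (n+1) x _ (by rw [← heq]; exact g0_lt n x)
  · exact le_csSup (lbar_bddAbove F (n+1) x) (Or.inr ⟨hFn hz.1, hz.2⟩)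

theorem rbar_ge (hx : x ∉ H n)
    (hHcl : ∃ δ > 0, ∀ h ∈ H n, ¬(x ≤ h ∧ h < x + δ)) : x < rbar H n x := by
  obtain ⟨δ, hδ, hgood⟩ := hHcl
  have hlb : ∀ z ∈ ({((⌊x * 2 ^ n⌋ : ℝ) + 1) / 2 ^ n} ∪ {h | h ∈ H n ∧ x < h}),
      min (((⌊x * 2 ^ n⌋ : ℝ) + 1) / 2 ^ n) (x + δ) ≤ z := by
    intro z hz
    rcases hz with hz | hz
    · rw [mem_singleton_iff] at hz
      exact hz ▸ min_le_left _ _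
    · refine le_trans (min_le_right _ _) ?_
      by_contra hcon
      push_neg at hcon
      exact hgood z hz.1 ⟨hz.2.le, hcon⟩
  have := le_csInf (rbar_nonempty H n x) hlb
  have hg := g1_gt n x
  calc x < min (((⌊x * 2 ^ n⌋ : ℝ) + 1) / 2 ^ n) (x + δ) := lt_min hg (by linarith)
    _ ≤ rbar H n x := this

theorem rbar_le (H : ℕ → Set ℝ) (n : ℕ) (x : ℝ) : rbar H n x ≤ x + 1 / 2 ^ n :=
  le_trans (csInf_le (rbar_bddBelow H n x) (Or.inl rfl)) (g1_le n x)

theorem rbar_ge_self (H : ℕ → Set ℝ) (n : ℕ) (x : ℝ) : x ≤ rbar H n x :=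
  le_csInf (rbar_nonempty H n x) fun z hz => by
    rcases hz with hz | hz
    · rw [mem_singleton_iff] at hz; exact hz ▸ (g1_gt n x).le
    · exact hz.2.le

theorem rbar_mem_ge (hh : y ∈ H n) (hxy : x < y) : rbar H n x ≤ y :=
  csInf_le (rbar_bddBelow H n x) (Or.inr ⟨hh, hxy⟩)

theorem rbar_mono (H : ℕ → Set ℝ) (n : ℕ) (hyx : y ≤ x) : rbar H n y ≤ rbar H n x := by
  apply le_csInf (rbar_nonempty H n x)
  intro z hz
  rcases hz with hz | hz
  · rw [mem_singleton_iff] at hz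
    subst hz
    refine le_trans (csInf_le (rbar_bddBelow H n y) (Or.inl rfl)) ?_
    apply (div_le_div_iff_of_pos_right (two_pow_pos n)).mpr
    have : (⌊y * 2 ^ n⌋ : ℤ) ≤ ⌊x * 2 ^ n⌋ :=
      Int.floor_le_floor (by nlinarith [two_pow_pos n])
    have : ((⌊y * 2 ^ n⌋ : ℤ) : ℝ) ≤ ((⌊x * 2 ^ n⌋ : ℤ) : ℝ) := by exact_mod_cast this
    linarith
  · exact csInf_le (rbar_bddBelow H n y) (Or.inr ⟨hz.1, lt_of_le_of_lt hyx hz.2⟩)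

theorem rbar_barrier (H : ℕ → Set ℝ) (n : ℕ) (h1 : x ≤ y) (h2 : y < rbar H n x) :
    rbar H n y = rbar H n x := by
  apply le_antisymm ?_ (rbar_mono H n h1)
  apply le_csInf (rbar_nonempty H n x)
  intro z hz
  rcases hz with hz | hz
  · rw [mem_singleton_iff] at hz
    subst hz
    have hgt : y < ((⌊x * 2 ^ n⌋ : ℝ) + 1) / 2 ^ n :=
      lt_of_lt_of_le h2 (csInf_le (rbar_bddBelow H n x) (Or.inl rfl))
    refine le_trans (csInf_le (rbar_bddBelow H n y) (Or.inl rfl)) ?_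
    have heq : ((⌊x * 2 ^ n⌋ : ℝ) + 1) / 2 ^ n = ((⌊x * 2 ^ n⌋ + 1 : ℤ) : ℝ) / 2 ^ n := by
      push_cast; ring
    rw [heq] at hgt ⊢
    exact gridge n y _ hgt
  · have hzy : y < z := lt_of_lt_of_le h2 (csInf_le (rbar_bddBelow H n x) (Or.inr hz))
    exact csInf_le (rbar_bddBelow H n y) (Or.inr ⟨hz.1, hzy⟩)

theorem rbar_mono_n (hHn : H n ⊆ H (n+1)) (x : ℝ) : rbar H (n+1) x ≤ rbar H n x := by
  apply le_csInf (rbar_nonempty H n x)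
  intro z hz
  rcases hz with hz | hz
  · rw [mem_singleton_iff] at hz
    subst hz
    refine le_trans (csInf_le (rbar_bddBelow H (n+1) x) (Or.inl rfl)) ?_
    have heq : ((⌊x * 2 ^ n⌋ : ℝ) + 1) / 2 ^ n
        = ((2 * (⌊x * 2 ^ n⌋ + 1) : ℤ) : ℝ) / 2 ^ (n+1) := by
      push_cast
      rw [pow_succ]
      field_simp
    rw [heq]
    exact gridge (n+1) x _ (by rw [← heq]; exact g1_gt n x)
  · exact csInf_le (rbar_bddBelow H (n+1) x) (Or.inr ⟨hHn hz.1, hz.2⟩)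

end Barrier

/-! ### Sufficiency: the transitive neighborhoods -/

def Good (A₃ A₄ : Set ℝ) (F H : ℕ → Set ℝ) : Prop :=
  (∀ n, F n ⊆ A₃) ∧ (∀ n, H n ⊆ A₄) ∧ (∀ n, F n ⊆ F (n+1)) ∧ (∀ n, H n ⊆ H (n+1)) ∧
  (∀ n x, x ∉ F n → ∃ δ > 0, ∀ f ∈ F n, ¬(x - δ < f ∧ f ≤ x)) ∧
  (∀ n x, x ∉ H n → ∃ δ > 0, ∀ h ∈ H n, ¬(x ≤ h ∧ h < x + δ)) ∧
  Disjoint A₃ A₄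

open Classical in
noncomputable def Unb (F H : ℕ → Set ℝ) (n : ℕ) (x : ℝ) : Set ℝ :=
  if x ∈ F n then Ico x (rbar H n x)
  else if x ∈ H n then Ioc (lbar F n x) x
  else Ioo (lbar F n x) (rbar H n x)

section UnbLemmas

variable {A₃ A₄ : Set ℝ} {F H : ℕ → Set ℝ} {n : ℕ} {x y : ℝ}

theorem Good.notH (hg : Good A₃ A₄ F H) {m k : ℕ} (hx : x ∈ F m) : x ∉ H k :=
  fun hh => (disjoint_left.mp hg.2.2.2.2.2.2) (hg.1 m hx) (hg.2.1 k hh)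

theorem Good.lbar_lt (hg : Good A₃ A₄ F H) (hx : x ∉ F n) : lbar F n x < x :=
  lbar_le hx (hg.2.2.2.2.1 n x hx)

theorem Good.rbar_gt (hg : Good A₃ A₄ F H) (hx : x ∉ H n) : x < rbar H n x :=
  rbar_ge hx (hg.2.2.2.2.2.1 n x hx)

theorem mem_Unb_self (hg : Good A₃ A₄ F H) : x ∈ Unb F H n x := by
  unfold Unb
  split_ifs with h1 h2
  · exact ⟨le_refl x, hg.rbar_gt (hg.notH h1)⟩
  · exact ⟨hg.lbar_lt h1, le_refl x⟩
  · exact ⟨hg.lbar_lt h1, hg.rbar_gt h2⟩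

theorem Unb_subset_Icc : Unb F H n x ⊆ Icc (x - 1 / 2 ^ n) (x + 1 / 2 ^ n) := by
  unfold Unb
  have h1 := lbar_ge F n x
  have h2 := rbar_le H n x
  have hp : (0:ℝ) < 1 / 2 ^ n := by positivity
  split_ifs with hF hH
  · exact fun z hz => ⟨by linarith [hz.1], by linarith [hz.2]⟩
  · exact fun z hz => ⟨by linarith [hz.1], by linarith [hz.2]⟩
  · exact fun z hz => ⟨by linarith [hz.1], by linarith [hz.2]⟩

theorem Unb_anti (hg : Good A₃ A₄ F H) : Unb F H (n+1) x ⊆ Unb F H n x := by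
  have hFm := hg.2.2.1 n
  have hHm := hg.2.2.2.1 n
  have hrm := rbar_mono_n (H := H) hHm x
  have hlm := lbar_mono_n (F := F) hFm x
  unfold Unb
  by_cases hF : x ∈ F n
  · rw [if_pos hF, if_pos (hFm hF)]
    exact fun z hz => ⟨hz.1, lt_of_lt_of_le hz.2 hrm⟩
  · rw [if_neg hF]
    have hlx := hg.lbar_lt hF
    by_cases hH : x ∈ H n
    · rw [if_pos hH, if_pos (hHm hH), if_neg (fun h => hg.notH h hH)]
      exact fun z hz => ⟨lt_of_le_of_lt hlm hz.1, hz.2⟩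
    · rw [if_neg hH]
      have hrx := hg.rbar_gt hH
      by_cases hF1 : x ∈ F (n+1)
      · rw [if_pos hF1]
        exact fun z hz => ⟨lt_of_lt_of_le hlx hz.1, lt_of_lt_of_le hz.2 hrm⟩
      · rw [if_neg hF1]
        by_cases hH1 : x ∈ H (n+1)
        · rw [if_pos hH1]
          exact fun z hz => ⟨lt_of_le_of_lt hlm hz.1, lt_of_le_of_lt hz.2 hrx⟩
        · rw [if_neg hH1]
          exact fun z hz => ⟨lt_of_le_of_lt hlm hz.1, lt_of_lt_of_le hz.2 hrm⟩

theorem Unb_anti_le (hg : Good A₃ A₄ F H) {m k : ℕ} (hmk : m ≤ k) :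
    Unb F H k x ⊆ Unb F H m x := by
  induction hmk with
  | refl => exact subset_rfl
  | step h ih => exact (Unb_anti hg).trans ih

theorem Unb_trans (hg : Good A₃ A₄ F H) (hy : y ∈ Unb F H n x) :
    Unb F H n y ⊆ Unb F H n x := by
  by_cases hxy : y = x
  · subst hxy; exact subset_rfl
  unfold Unb at hy ⊢
  by_cases hxF : x ∈ F n
  · rw [if_pos hxF] at hy ⊢
    have hxlt : x < y := lt_of_le_of_ne hy.1 (Ne.symm hxy)
    have hreq : rbar H n y = rbar H n x := rbar_barrier H n hy.1 hy.2
    by_cases hyF : y ∈ F n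
    · rw [if_pos hyF, hreq]
      exact fun z hz => ⟨le_trans hy.1 hz.1, hz.2⟩
    · rw [if_neg hyF]
      by_cases hyH : y ∈ H n
      · exact absurd (rbar_mem_ge hyH hxlt) (not_le.mpr hy.2)
      · rw [if_neg hyH, hreq]
        have hxle : x ≤ lbar F n y := lbar_mem_le hxF hxlt
        exact fun z hz => ⟨le_of_lt (lt_of_le_of_lt hxle hz.1), hz.2⟩
  · rw [if_neg hxF] at hy ⊢
    by_cases hxH : x ∈ H n
    · rw [if_pos hxH] at hy ⊢
      have hylt : y < x := lt_of_le_of_ne hy.2 hxy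
      have hleq : lbar F n y = lbar F n x := lbar_barrier F n hy.1 hy.2
      by_cases hyF : y ∈ F n
      · exact absurd (lbar_mem_le hyF hylt) (not_le.mpr hy.1)
      · rw [if_neg hyF]
        by_cases hyH : y ∈ H n
        · rw [if_pos hyH, hleq]
          exact fun z hz => ⟨hz.1, le_trans hz.2 hy.2⟩
        · rw [if_neg hyH, hleq]
          have hrle : rbar H n y ≤ x := rbar_mem_ge hxH hylt
          exact fun z hz => ⟨hz.1, le_of_lt (lt_of_lt_of_le hz.2 hrle)⟩
    · rw [if_neg hxH] at hy ⊢
      by_cases hyF : y ∈ F n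
      · have hxlt : x < y := by
          rcases lt_trichotomy y x with h | h | h
          · exact absurd (lbar_mem_le hyF h) (not_le.mpr hy.1)
          · exact absurd h hxy
          · exact h
        have hreq : rbar H n y = rbar H n x := rbar_barrier H n (le_of_lt hxlt) hy.2
        rw [if_pos hyF, hreq]
        exact fun z hz => ⟨lt_of_lt_of_le hy.1 hz.1, hz.2⟩
      · rw [if_neg hyF]
        by_cases hyH : y ∈ H n
        · have hylt : y < x := by
            rcases lt_trichotomy y x with h | h | h
            · exact h
            · exact absurd h hxy
            · exact absurd (rbar_mem_ge hyH h) (not_le.mpr hy.2)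
          have hleq : lbar F n y = lbar F n x := lbar_barrier F n hy.1 (le_of_lt hylt)
          rw [if_pos hyH, hleq]
          have hxr : x < rbar H n x := hg.rbar_gt hxH
          exact fun z hz => ⟨hz.1, lt_of_le_of_lt hz.2 (lt_trans hylt hxr)⟩
        · rw [if_neg hyH]
          rcases le_or_gt x y with h | h
          · have hreq : rbar H n y = rbar H n x := rbar_barrier H n h hy.2
            have hlle : lbar F n x ≤ lbar F n y := lbar_mono F n h
            rw [hreq]
            exact fun z hz => ⟨lt_of_le_of_lt hlle hz.1, hz.2⟩
          · have hleq : lbar F n y = lbar F n x := lbar_barrier F n hy.1 (le_of_lt h)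
            have hrle : rbar H n y ≤ rbar H n x := rbar_mono H n (le_of_lt h)
            rw [hleq]
            exact fun z hz => ⟨hz.1, lt_of_lt_of_le hz.2 hrle⟩

theorem Unb_isOpen {A₁ : Set ℝ} (hcov : Is4Cover A₁ ∅ A₃ A₄) (hg : Good A₃ A₄ F H) :
    IsOpen[hybridTop A₁ ∅ A₃ A₄] (Unb F H n x) := by
  unfold Unb
  split_ifs with h1 h2
  · exact hybrid_isOpen_Ico hcov (hg.1 n h1)
  · exact hybrid_isOpen_Ioc hcov (hg.2.1 n h2)
  · exact hybrid_isOpen_Ioo hcov _ _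

end UnbLemmas

/-! ### Sufficiency: the quasi-metric -/

section Rho

variable {A₁ A₃ A₄ : Set ℝ} {F H : ℕ → Set ℝ} {n : ℕ} {x y z : ℝ}

theorem half_pow (n : ℕ) : (1:ℝ) / 2 ^ n = (1/2) ^ n := by
  rw [div_pow, one_pow]

theorem half_pow_pos (n : ℕ) : (0:ℝ) < (1/2) ^ n := by positivity

theorem exists_notMem_Unb (hxy : x ≠ y) : ∃ n, y ∉ Unb F H n x := by
  have hpos : 0 < |y - x| := abs_pos.mpr (sub_ne_zero.mpr (Ne.symm hxy))
  obtain ⟨n, hn⟩ := exists_pow_lt_of_lt_one hpos (by norm_num : (1:ℝ)/2 < 1)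
  refine ⟨n, fun hmem => ?_⟩
  have h := Unb_subset_Icc hmem
  rw [half_pow] at h
  have : |y - x| ≤ (1/2) ^ n := abs_sub_le_iff.mpr ⟨by linarith [h.2], by linarith [h.1]⟩
  linarith

noncomputable def Kdx (F H : ℕ → Set ℝ) (x y : ℝ) : ℕ := sInf {n | y ∉ Unb F H n x}

open Classical in
noncomputable def rho (F H : ℕ → Set ℝ) (x y : ℝ) : ℝ :=
  if x = y then 0 else 2 * (1/2) ^ (Kdx F H x y)

theorem K_notMem (hxy : x ≠ y) : y ∉ Unb F H (Kdx F H x y) x :=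
  Nat.sInf_mem (exists_notMem_Unb hxy)

theorem mem_iff_lt_K (hg : Good A₃ A₄ F H) (hxy : x ≠ y) :
    y ∈ Unb F H n x ↔ n < Kdx F H x y := by
  constructor
  · intro hmem
    by_contra hcon
    push_neg at hcon
    exact K_notMem hxy (Unb_anti_le hg hcon hmem)
  · intro hlt
    by_contra hcon
    exact Nat.notMem_of_lt_sInf hlt hcon

theorem rho_lt_iff (hg : Good A₃ A₄ F H) (x y : ℝ) (n : ℕ) :
    rho F H x y < (1/2) ^ n ↔ y ∈ Unb F H (n+1) x := by
  by_cases hxy : x = y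
  · subst hxy
    simp only [rho, if_pos rfl]
    exact ⟨fun _ => mem_Unb_self hg, fun _ => half_pow_pos n⟩
  · rw [rho, if_neg hxy, mem_iff_lt_K hg hxy]
    constructor
    · intro hlt
      have h1 : ((1:ℝ)/2) ^ (Kdx F H x y) < (1/2) ^ (n+1) := by
        rw [pow_succ]
        linarith
      have := (pow_lt_pow_iff_right_of_lt_one₀ (by norm_num : (0:ℝ) < 1/2)
        (by norm_num : (1:ℝ)/2 < 1)).mp h1
      omega
    · intro hlt
      have h1 : ((1:ℝ)/2) ^ (Kdx F H x y) < (1/2) ^ (n+1) :=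
        (pow_lt_pow_iff_right_of_lt_one₀ (by norm_num : (0:ℝ) < 1/2)
          (by norm_num : (1:ℝ)/2 < 1)).mpr (by omega)
      rw [pow_succ] at h1
      linarith

theorem rho_nonneg (x y : ℝ) : 0 ≤ rho F H x y := by
  rw [rho]
  split_ifs
  · exact le_refl 0
  · positivity

theorem rho_eq_zero_iff (x y : ℝ) : rho F H x y = 0 ↔ x = y := by
  rw [rho]
  split_ifs with h
  · exact ⟨fun _ => h, fun _ => rfl⟩
  · refine ⟨fun hc => absurd hc (ne_of_gt (by positivity)), fun hc => absurd hc h⟩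

theorem rho_na (hg : Good A₃ A₄ F H) (x y z : ℝ) :
    rho F H x y ≤ max (rho F H x z) (rho F H z y) := by
  by_cases hxy : x = y
  · subst hxy
    rw [show rho F H x x = 0 from (rho_eq_zero_iff x x).mpr rfl]
    exact le_max_of_le_left (rho_nonneg x z)
  by_cases hzx : z = x
  · subst hzx
    exact le_max_of_le_right (le_refl _)
  by_cases hzy : z = y
  · subst hzy
    exact le_max_of_le_left (le_refl _)
  by_contra hcon
  push_neg at hcon
  obtain ⟨h1, h2⟩ := max_lt_iff.mp hcon
  have e1 : rho F H x z = 2*(1/2)^(Kdx F H x z) := by rw [rho, if_neg (fun h => hzx h.symm)]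
  have e2 : rho F H z y = 2*(1/2)^(Kdx F H z y) := by rw [rho, if_neg hzy]
  have e3 : rho F H x y = 2*(1/2)^(Kdx F H x y) := by rw [rho, if_neg hxy]
  rw [e1, e3] at h1
  rw [e2, e3] at h2
  have hK1 : Kdx F H x y < Kdx F H x z :=
    (pow_lt_pow_iff_right_of_lt_one₀ (by norm_num : (0:ℝ) < 1/2)
      (by norm_num : (1:ℝ)/2 < 1)).mp (by linarith)
  have hK2 : Kdx F H x y < Kdx F H z y :=
    (pow_lt_pow_iff_right_of_lt_one₀ (by norm_num : (0:ℝ) < 1/2)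
      (by norm_num : (1:ℝ)/2 < 1)).mp (by linarith)
  have hz : z ∈ Unb F H (Kdx F H x y) x := (mem_iff_lt_K hg (fun h => hzx h.symm)).mpr hK1
  have hy : y ∈ Unb F H (Kdx F H x y) z := (mem_iff_lt_K hg hzy).mpr hK2
  have : y ∈ Unb F H (Kdx F H x y) x := Unb_trans hg hz hy
  exact absurd ((mem_iff_lt_K hg hxy).mp this) (lt_irrefl _)

theorem rho_quasi (hg : Good A₃ A₄ F H) : IsQuasiMetric (rho F H) :=
  ⟨rho_nonneg, rho_eq_zero_iff, fun x y z =>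
    le_trans (rho_na hg x y z) (max_le_add_of_nonneg (rho_nonneg x z) (rho_nonneg z y))⟩

theorem rhoBall_eq (hg : Good A₃ A₄ F H) (x : ℝ) (n : ℕ) :
    {y | rho F H x y < (1/2) ^ n} = Unb F H (n+1) x := by
  ext y
  exact rho_lt_iff hg x y n

theorem Good.F_le (hg : Good A₃ A₄ F H) {m k : ℕ} (hmk : m ≤ k) : F m ⊆ F k := by
  induction hmk with
  | refl => exact subset_rfl
  | step h ih => exact ih.trans (hg.2.2.1 _)

theorem Good.H_le (hg : Good A₃ A₄ F H) {m k : ℕ} (hmk : m ≤ k) : H m ⊆ H k := by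
  induction hmk with
  | refl => exact subset_rfl
  | step h ih => exact ih.trans (hg.2.2.2.1 _)

theorem Ubase3 (hg : Good A₃ A₄ F H) (hx : ∃ m, x ∈ F m) {ε : ℝ} (hε : 0 < ε) :
    ∃ n, Unb F H (n+1) x ⊆ Ico x (x + ε) := by
  obtain ⟨m, hm⟩ := hx
  obtain ⟨k, hk⟩ := exists_pow_lt_of_lt_one hε (by norm_num : (1:ℝ)/2 < 1)
  refine ⟨m + k, ?_⟩
  have hxF : x ∈ F (m + k + 1) := hg.F_le (by omega) hm
  unfold Unb
  rw [if_pos hxF]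
  intro w hw
  refine ⟨hw.1, lt_of_lt_of_le (lt_of_lt_of_le hw.2 (rbar_le H _ x)) ?_⟩
  rw [half_pow]
  have : ((1:ℝ)/2) ^ (m + k + 1) ≤ (1/2) ^ k :=
    pow_le_pow_of_le_one (by norm_num) (by norm_num) (by omega)
  linarith

theorem Ubase4 (hg : Good A₃ A₄ F H) (hx : ∃ m, x ∈ H m) {ε : ℝ} (hε : 0 < ε) :
    ∃ n, Unb F H (n+1) x ⊆ Ioc (x - ε) x := by
  obtain ⟨m, hm⟩ := hx
  obtain ⟨k, hk⟩ := exists_pow_lt_of_lt_one hε (by norm_num : (1:ℝ)/2 < 1)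
  refine ⟨m + k, ?_⟩
  have hxH : x ∈ H (m + k + 1) := hg.H_le (by omega) hm
  have hxF : x ∉ F (m + k + 1) := fun h => hg.notH h hxH
  unfold Unb
  rw [if_neg hxF, if_pos hxH]
  intro w hw
  refine ⟨lt_of_le_of_lt ?_ (lt_of_le_of_lt (lbar_ge F _ x) hw.1), hw.2⟩
  rw [half_pow]
  have : ((1:ℝ)/2) ^ (m + k + 1) ≤ (1/2) ^ k :=
    pow_le_pow_of_le_one (by norm_num) (by norm_num) (by omega)
  linarith

theorem small_pow {ε : ℝ} (hε : 0 < ε) : ∃ n : ℕ, 1 / 2 ^ (n+1) < ε := by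
  obtain ⟨k, hk⟩ := exists_pow_lt_of_lt_one hε (by norm_num : (1:ℝ)/2 < 1)
  refine ⟨k, ?_⟩
  rw [half_pow]
  have : ((1:ℝ)/2) ^ (k+1) ≤ (1/2) ^ k :=
    pow_le_pow_of_le_one (by norm_num) (by norm_num) (by omega)
  linarith

theorem rho_topEq (hcov : Is4Cover A₁ ∅ A₃ A₄) (hg : Good A₃ A₄ F H)
    (hFc : ∀ x ∈ A₃, ∃ m, x ∈ F m) (hHc : ∀ x ∈ A₄, ∃ m, x ∈ H m) :
    hybridTop A₁ ∅ A₃ A₄ = quasiMetricTop (rho F H) := by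
  apply le_antisymm
  · unfold quasiMetricTop
    apply le_generateFrom
    rintro S ⟨x, r, hr, rfl⟩
    letI := hybridTop A₁ ∅ A₃ A₄
    rw [isOpen_iff_forall_mem_open]
    intro z hz
    obtain ⟨n, hn⟩ := exists_pow_lt_of_lt_one hr (by norm_num : (1:ℝ)/2 < 1)
    refine ⟨Unb F H (n+1) z, ?_, Unb_isOpen hcov hg, mem_Unb_self hg⟩
    intro w hw
    have h1 : rho F H z w < (1/2) ^ n := (rho_lt_iff hg z w n).mpr hw
    have h2 := rho_na hg x w z
    exact lt_of_le_of_lt h2 (max_lt hz (lt_trans h1 hn))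
  · unfold hybridTop
    apply le_generateFrom
    intro S hS
    letI := quasiMetricTop (rho F H)
    rw [isOpen_iff_forall_mem_open]
    intro w hw
    have hballopen : ∀ (m : ℕ), IsOpen[quasiMetricTop (rho F H)] (Unb F H (m+1) w) := by
      intro m
      exact rhoBall_eq hg w m ▸ TopologicalSpace.isOpen_generateFrom_of_mem
        ⟨w, (1/2)^m, half_pow_pos m, rfl⟩
    rcases hS with (((⟨c, hc, ε, hε, rfl⟩ | ⟨c, hc, _⟩) | ⟨c, hc, ε, hε, rfl⟩) |
      ⟨c, hc, ε, hε, rfl⟩)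
    · -- Ioo (c-ε) (c+ε)
      obtain ⟨hw1, hw2⟩ := hw
      obtain ⟨n, hn⟩ := small_pow
        (lt_min (by linarith : (0:ℝ) < w - (c-ε)) (by linarith : (0:ℝ) < c + ε - w))
      refine ⟨Unb F H (n+1) w, ?_, hballopen n, mem_Unb_self hg⟩
      intro u hu
      obtain ⟨hu1, hu2⟩ := Unb_subset_Icc hu
      have hm1 := min_le_left (w - (c-ε)) (c + ε - w)
      have hm2 := min_le_right (w - (c-ε)) (c + ε - w)
      exact ⟨by linarith, by linarith⟩
    · exact absurd hc (Set.notMem_empty c)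
    · -- Ico c (c+ε), c ∈ A₃
      obtain ⟨hw1, hw2⟩ := hw
      by_cases hwc : w = c
      · subst hwc
        obtain ⟨n, hsub⟩ := Ubase3 hg (hFc w hc) hε
        exact ⟨Unb F H (n+1) w, hsub, hballopen n, mem_Unb_self hg⟩
      · have hclt : c < w := lt_of_le_of_ne hw1 (Ne.symm hwc)
        obtain ⟨n, hn⟩ := small_pow
          (lt_min (by linarith : (0:ℝ) < w - c) (by linarith : (0:ℝ) < c + ε - w))
        refine ⟨Unb F H (n+1) w, ?_, hballopen n, mem_Unb_self hg⟩
        intro u hu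
        obtain ⟨hu1, hu2⟩ := Unb_subset_Icc hu
        have hm1 := min_le_left (w - c) (c + ε - w)
        have hm2 := min_le_right (w - c) (c + ε - w)
        exact ⟨by linarith, by linarith⟩
    · -- Ioc (c-ε) c, c ∈ A₄
      obtain ⟨hw1, hw2⟩ := hw
      by_cases hwc : w = c
      · subst hwc
        obtain ⟨n, hsub⟩ := Ubase4 hg (hHc w hc) hε
        exact ⟨Unb F H (n+1) w, hsub, hballopen n, mem_Unb_self hg⟩
      · have hclt : w < c := lt_of_le_of_ne hw2 hwc
        obtain ⟨n, hn⟩ := small_pow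
          (lt_min (by linarith : (0:ℝ) < w - (c-ε)) (by linarith : (0:ℝ) < c - w))
        refine ⟨Unb F H (n+1) w, ?_, hballopen n, mem_Unb_self hg⟩
        intro u hu
        obtain ⟨hu1, hu2⟩ := Unb_subset_Icc hu
        have hm1 := min_le_left (w - (c-ε)) (c - w)
        have hm2 := min_le_right (w - (c-ε)) (c - w)
        exact ⟨by linarith, by linarith⟩

end Rho

/-- **Corollary (A₂ = ∅ case).** If `A₂ = ∅`, then `H₄(𝒜)` is quasi-metrizable iff
`A₃` is of type `F_σ` in `𝕊←` and `A₄` is of type `F_σ` in `𝕊`. -/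
theorem hybrid_quasiMetrizable_iff_Fsigma_of_A2_empty
    (A₁ A₂ A₃ A₄ : Set ℝ) (hcov : Is4Cover A₁ A₂ A₃ A₄) (h2 : A₂ = ∅) :
    QuasiMetrizableTop (hybridTop A₁ A₂ A₃ A₄) ↔
      (∃ F : ℕ → Set ℝ, (∀ n, @IsClosed ℝ sorgenfreyLeftTop (F n)) ∧ A₃ = ⋃ n, F n) ∧
      (∃ H : ℕ → Set ℝ, (∀ n, @IsClosed ℝ sorgenfreyTop (H n)) ∧ A₄ = ⋃ n, H n) := by
  subst h2
  constructor
  · exact fun hq => necessity hcov hq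
  · rintro ⟨⟨F0, hF0cl, hF0U⟩, ⟨H0, hH0cl, hH0U⟩⟩
    have d34 : Disjoint A₃ A₄ := hcov.2.2.2.2.2.2
    set F : ℕ → Set ℝ := fun n => ⋃ k ∈ Iic n, F0 k with hFdef
    set H : ℕ → Set ℝ := fun n => ⋃ k ∈ Iic n, H0 k with hHdef
    have hF3 : ∀ n, F n ⊆ A₃ := by
      intro n z hz
      simp only [hFdef, mem_iUnion] at hz
      obtain ⟨k, _, hk⟩ := hz
      exact hF0U ▸ mem_iUnion.mpr ⟨k, hk⟩
    have hH4 : ∀ n, H n ⊆ A₄ := by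
      intro n z hz
      simp only [hHdef, mem_iUnion] at hz
      obtain ⟨k, _, hk⟩ := hz
      exact hH0U ▸ mem_iUnion.mpr ⟨k, hk⟩
    have hFm : ∀ n, F n ⊆ F (n+1) := by
      intro n z hz
      simp only [hFdef, mem_iUnion] at hz ⊢
      obtain ⟨k, hk1, hk2⟩ := hz
      exact ⟨k, by simp only [mem_Iic] at hk1 ⊢; omega, hk2⟩
    have hHm : ∀ n, H n ⊆ H (n+1) := by
      intro n z hz
      simp only [hHdef, mem_iUnion] at hz ⊢
      obtain ⟨k, hk1, hk2⟩ := hz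
      exact ⟨k, by simp only [mem_Iic] at hk1 ⊢; omega, hk2⟩
    have hFcl : ∀ n, IsClosed[sorgenfreyLeftTop] (F n) := by
      intro n
      letI := sorgenfreyLeftTop
      exact (Set.finite_Iic n).isClosed_biUnion (fun k _ => hF0cl k)
    have hHcl : ∀ n, IsClosed[sorgenfreyTop] (H n) := by
      intro n
      letI := sorgenfreyTop
      exact (Set.finite_Iic n).isClosed_biUnion (fun k _ => hH0cl k)
    have hFcle : ∀ n x, x ∉ F n → ∃ δ > 0, ∀ f ∈ F n, ¬(x - δ < f ∧ f ≤ x) :=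
      fun n x hx => (sorgL_isClosed_iff.mp (hFcl n)) x hx
    have hHcle : ∀ n x, x ∉ H n → ∃ δ > 0, ∀ h ∈ H n, ¬(x ≤ h ∧ h < x + δ) :=
      fun n x hx => (sorg_isClosed_iff.mp (hHcl n)) x hx
    have hg : Good A₃ A₄ F H := ⟨hF3, hH4, hFm, hHm, hFcle, hHcle, d34⟩
    have hFc : ∀ x ∈ A₃, ∃ m, x ∈ F m := by
      intro x hx
      obtain ⟨m, hm⟩ := mem_iUnion.mp (hF0U ▸ hx)
      exact ⟨m, by simp only [hFdef, mem_iUnion]; exact ⟨m, mem_Iic.mpr le_rfl, hm⟩⟩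
    have hHc : ∀ x ∈ A₄, ∃ m, x ∈ H m := by
      intro x hx
      obtain ⟨m, hm⟩ := mem_iUnion.mp (hH0U ▸ hx)
      exact ⟨m, by simp only [hHdef, mem_iUnion]; exact ⟨m, mem_Iic.mpr le_rfl, hm⟩⟩
    exact ⟨rho F H, rho_quasi hg, rho_topEq hcov hg hFc hHc⟩
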